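/- For every integer a ≥ 1 and n ≥ 0, the metallic cube Π^a_n is a median graph: for any three vertices u, v, w there exists a unique vertex m such that d(u,m) + d(m,v) = d(u,v), d(v,m) + d(m,w) = d(v,w) and d(u,m) + d(m,w) = d(u,w), where d denotes graph distance in Π^a_n. -/

import Mathlib

/-!
The graph distance of `Π^a_n` is the ℓ¹ distance of the strings: from `u ≠ v` one can always
move one unit towards `v` without creating an illegal letter `a`, by lowering a coordinate where
`u` exceeds `v` or, if `u ≤ v` coordinatewise, raising one where `u` is below `v`.
For the ℓ¹ distance, `t` lies between `x` and `y` iff it does so in every coordinate, so a median of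
`u, v, w` must be their coordinatewise median. That string is a vertex: if its `k`-th letter is `a`,
two of the three strings have `a` at position `k`, hence `0` just before it, and so does the median.
-/

/-- Strings of length `n` over the alphabet `{0,1,…,a}` in which the letter `a`
occurs only immediately after a `0` (i.e. `a` appears only inside blocks `0a`). -/
def MetallicOK (a n : ℕ) (α : Fin n → Fin (a + 1)) : Prop :=
  ∀ i : Fin n, (α i : ℕ) = a →
    ∃ j : Fin n, (j : ℕ) + 1 = (i : ℕ) ∧ (α j : ℕ) = 0

instance (a n : ℕ) : DecidablePred (MetallicOK a n) := fun α => by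
  unfold MetallicOK; infer_instance

/-- Vertices of the metallic cube `Π^a_n`. -/
abbrev MetallicVertex (a n : ℕ) : Type :=
  {α : Fin n → Fin (a + 1) // MetallicOK a n α}

/-- The metallic cube `Π^a_n`: two strings are adjacent iff `Σ_i |α_i - β_i| = 1`. -/
def metallicCube (a n : ℕ) : SimpleGraph (MetallicVertex a n) where
  Adj u v := (∑ i : Fin n, Nat.dist (u.1 i : ℕ) (v.1 i : ℕ)) = 1
  symm := by
    constructor
    intro u v h
    simpa [Nat.dist_comm] using h
  loopless := by
    constructor
    intro u h
    simp [Nat.dist_self] at h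

instance (a n : ℕ) : DecidableRel (metallicCube a n).Adj := fun u v =>
  inferInstanceAs (Decidable ((∑ i : Fin n, Nat.dist (u.1 i : ℕ) (v.1 i : ℕ)) = 1))

open Finset Function

namespace SimpleGraph

variable {V : Type*} {G : SimpleGraph V} {f : V → ℕ} {v : V}

lemma Walk.le_length_add_of_forall_adj (hf : ∀ x y, G.Adj x y → f x ≤ f y + 1) {u w : V}
    (p : G.Walk u w) : f u ≤ p.length + f w := by
  induction p with
  | nil => simp
  | cons h p ih =>
    have := hf _ _ h
    rw [Walk.length_cons]
    omega

lemma exists_walk_length_eq_of_exists_adj (hv : f v = 0)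
    (hstep : ∀ u ≠ v, ∃ w, G.Adj u w ∧ f w + 1 = f u) (u : V) :
    ∃ p : G.Walk u v, p.length = f u := by
  induction hk : f u using Nat.strong_induction_on generalizing u with
  | _ k ih =>
    by_cases huv : u = v
    · subst huv
      exact ⟨.nil, by rw [Walk.length_nil, ← hk, hv]⟩
    · obtain ⟨w, hadj, hw⟩ := hstep u huv
      obtain ⟨p, hp⟩ := ih (f w) (by omega) w rfl
      exact ⟨.cons hadj p, by rw [Walk.length_cons, hp]; omega⟩

theorem dist_eq_of_forall_adj (hf : ∀ x y, G.Adj x y → f x ≤ f y + 1) (hv : f v = 0)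
    (hstep : ∀ u ≠ v, ∃ w, G.Adj u w ∧ f w + 1 = f u) (u : V) : G.dist u v = f u := by
  obtain ⟨p, hp⟩ := exists_walk_length_eq_of_exists_adj hv hstep u
  obtain ⟨q, hq⟩ := p.reachable.exists_walk_length_eq_dist
  have := q.le_length_add_of_forall_adj hf
  have := G.dist_le p
  omega

end SimpleGraph

def l1Dist {ι : Type*} [Fintype ι] {m : ℕ} (x y : ι → Fin m) : ℕ :=
  ∑ i, Nat.dist (x i) (y i)

section L1Dist

variable {ι : Type*} [Fintype ι] {m : ℕ}

lemma l1Dist_self (x : ι → Fin m) : l1Dist x x = 0 := by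
  simp [l1Dist, Nat.dist_self]

lemma l1Dist_comm (x y : ι → Fin m) : l1Dist x y = l1Dist y x := by
  simp only [l1Dist, Nat.dist_comm]

lemma l1Dist_triangle (x y z : ι → Fin m) : l1Dist x z ≤ l1Dist x y + l1Dist y z := by
  rw [l1Dist, l1Dist, l1Dist, ← sum_add_distrib]
  exact sum_le_sum fun i _ ↦ Nat.dist.triangle_inequality _ _ _

lemma l1Dist_update_add [DecidableEq ι] (x y : ι → Fin m) (i : ι) (c : Fin m) :
    l1Dist (update x i c) y + Nat.dist (x i) (y i) = l1Dist x y + Nat.dist c (y i) := by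
  have hrest : ∑ j ∈ univ.erase i, Nat.dist (update x i c j) (y j) =
      ∑ j ∈ univ.erase i, Nat.dist (x j) (y j) :=
    sum_congr rfl fun j hj ↦ by rw [update_of_ne (ne_of_mem_erase hj)]
  rw [l1Dist, l1Dist, ← add_sum_erase _ _ (mem_univ i), ← add_sum_erase _ _ (mem_univ i), hrest,
    update_self]
  ring

lemma l1Dist_add_l1Dist_eq_iff (x y z : ι → Fin m) :
    l1Dist x y + l1Dist y z = l1Dist x z ↔
      ∀ i, Nat.dist (x i) (y i) + Nat.dist (y i) (z i) = Nat.dist (x i) (z i) := by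
  rw [l1Dist, l1Dist, l1Dist, ← sum_add_distrib, eq_comm,
    sum_eq_sum_iff_of_le fun i _ ↦ Nat.dist.triangle_inequality _ _ _]
  simp [eq_comm]

end L1Dist

def median {α : Type*} [LinearOrder α] (x y z : α) : α :=
  max (min x y) (min (max x y) z)

lemma Fin.val_median {m : ℕ} (x y z : Fin m) :
    ((median x y z : Fin m) : ℕ) = median (x : ℕ) y z := by
  simp only [median, Fin.coe_max, Fin.coe_min]

lemma Nat.dist_add_dist_eq_and_and_iff_eq_median (x y z t : ℕ) :
    (Nat.dist x t + Nat.dist t y = Nat.dist x y ∧ Nat.dist y t + Nat.dist t z = Nat.dist y z ∧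
      Nat.dist x t + Nat.dist t z = Nat.dist x z) ↔ t = median x y z := by
  simp only [Nat.dist, median]
  omega

namespace MetallicOK

variable {a n : ℕ} {α β γ : Fin n → Fin (a + 1)}

lemma apply_eq_zero (h : MetallicOK a n α) {i j : Fin n} (hi : (α i : ℕ) = a)
    (hj : (j : ℕ) + 1 = i) : (α j : ℕ) = 0 := by
  obtain ⟨k, hk, hk0⟩ := h i hi
  rwa [show j = k from Fin.ext (by omega)]

lemma update_of_lt (h : MetallicOK a n α) {i : Fin n} {c : Fin (a + 1)} (hc : (c : ℕ) < α i) :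
    MetallicOK a n (update α i c) := by
  intro k hk
  have hki : k ≠ i := by
    rintro rfl
    rw [update_self] at hk
    have := (α k).isLt
    omega
  rw [update_of_ne hki] at hk
  obtain ⟨j, hj, hj0⟩ := h k hk
  have hji : j ≠ i := by
    rintro rfl
    omega
  exact ⟨j, hj, by rwa [update_of_ne hji]⟩

lemma update_of_le (hα : MetallicOK a n α) (hβ : MetallicOK a n β) (hle : α ≤ β) {i : Fin n}
    {c : Fin (a + 1)} (hαc : (α i : ℕ) < c) (hcβ : (c : ℕ) ≤ β i) :
    MetallicOK a n (update α i c) := by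
  have hle' (j : Fin n) : (α j : ℕ) ≤ β j := hle j
  intro k hk
  by_cases hki : k = i
  · subst hki
    rw [update_self] at hk
    have hβk : (β k : ℕ) = a := by
      have := (β k).isLt
      omega
    obtain ⟨j, hj, hj0⟩ := hβ k hβk
    have hji : j ≠ k := by
      rintro rfl
      omega
    have := hle' j
    exact ⟨j, hj, by rw [update_of_ne hji]; omega⟩
  · rw [update_of_ne hki] at hk
    obtain ⟨j, hj, hj0⟩ := hα k hk
    have hβk : (β k : ℕ) = a := by
      have := (β k).isLt
      have := hle' k
      omega
    have hji : j ≠ i := by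
      rintro rfl
      have := hβ.apply_eq_zero hβk hj
      omega
    exact ⟨j, hj, by rwa [update_of_ne hji]⟩

lemma median (hα : MetallicOK a n α) (hβ : MetallicOK a n β) (hγ : MetallicOK a n γ) :
    MetallicOK a n fun i ↦ _root_.median (α i) (β i) (γ i) := by
  intro k hk
  rw [Fin.val_median] at hk
  have := (α k).isLt
  have := (β k).isLt
  have := (γ k).isLt
  obtain ⟨j, hj⟩ : ∃ j : Fin n, (j : ℕ) + 1 = k := by
    by_cases hαk : (α k : ℕ) = a
    · exact (hα k hαk).imp fun _ ↦ And.left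
    · refine (hβ k ?_).imp fun _ ↦ And.left
      simp only [_root_.median] at hk
      omega
  have hpred {δ : Fin n → Fin (a + 1)} (hδ : MetallicOK a n δ) :
      (δ k : ℕ) ≠ a ∨ (δ j : ℕ) = 0 :=
    or_iff_not_imp_left.2 fun h ↦ hδ.apply_eq_zero (not_not.1 h) hj
  refine ⟨j, hj, ?_⟩
  have := hpred hα
  have := hpred hβ
  have := hpred hγ
  rw [Fin.val_median]
  simp only [_root_.median] at hk ⊢
  omega

end MetallicOK

namespace MetallicVertex

variable {a n : ℕ}

def median (u v w : MetallicVertex a n) : MetallicVertex a n :=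
  ⟨fun i ↦ _root_.median (u.1 i) (v.1 i) (w.1 i), u.2.median v.2 w.2⟩

lemma median_val (u v w : MetallicVertex a n) :
    (median u v w).1 = fun i ↦ _root_.median (u.1 i) (v.1 i) (w.1 i) :=
  rfl

lemma adj_and_l1Dist_update_add_one {u v : MetallicVertex a n} {i : Fin n} {c : Fin (a + 1)}
    (hc : MetallicOK a n (update u.1 i c)) (hstep : Nat.dist (u.1 i) c = 1)
    (hcloser : Nat.dist c (v.1 i) + 1 = Nat.dist (u.1 i) (v.1 i)) :
    (metallicCube a n).Adj u ⟨_, hc⟩ ∧ l1Dist (update u.1 i c) v.1 + 1 = l1Dist u.1 v.1 := by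
  constructor
  · have := l1Dist_update_add u.1 u.1 i c
    rw [l1Dist_self, Nat.dist_self, Nat.dist_comm, hstep] at this
    change l1Dist u.1 (update u.1 i c) = 1
    rw [l1Dist_comm]
    omega
  · have := l1Dist_update_add u.1 v.1 i c
    omega

lemma exists_adj_l1Dist_add_one {u v : MetallicVertex a n} (hne : u ≠ v) :
    ∃ w, (metallicCube a n).Adj u w ∧ l1Dist w.1 v.1 + 1 = l1Dist u.1 v.1 := by
  by_cases hdown : ∃ i, v.1 i < u.1 i
  · obtain ⟨i, hi⟩ := hdown
    rw [Fin.lt_def] at hi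
    let c : Fin (a + 1) := ⟨u.1 i - 1, by omega⟩
    have hc : (c : ℕ) = u.1 i - 1 := rfl
    exact ⟨_, adj_and_l1Dist_update_add_one (u.2.update_of_lt (i := i) (c := c) (by omega))
      (by simp only [Nat.dist]; omega) (by simp only [Nat.dist]; omega)⟩
  · simp only [not_exists, not_lt] at hdown
    obtain ⟨i, hi⟩ : ∃ i, u.1 i ≠ v.1 i := by
      contrapose! hne
      exact Subtype.ext (funext hne)
    have hi' : (u.1 i : ℕ) < v.1 i := lt_of_le_of_ne (hdown i) (Fin.val_ne_of_ne hi)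
    let c : Fin (a + 1) := ⟨u.1 i + 1, by omega⟩
    have hc : (c : ℕ) = u.1 i + 1 := rfl
    exact ⟨_, adj_and_l1Dist_update_add_one
      (u.2.update_of_le v.2 hdown (i := i) (c := c) (by omega) (by omega))
      (by simp only [Nat.dist]; omega) (by simp only [Nat.dist]; omega)⟩

lemma metallicCube_dist (u v : MetallicVertex a n) :
    (metallicCube a n).dist u v = l1Dist u.1 v.1 :=
  SimpleGraph.dist_eq_of_forall_adj (f := fun x ↦ l1Dist x.1 v.1)
    (fun x y hxy ↦ (l1Dist_triangle x.1 y.1 v.1).trans_eq <| by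
      rw [show l1Dist x.1 y.1 = 1 from hxy, add_comm])
    (l1Dist_self _) (fun _ hne ↦ exists_adj_l1Dist_add_one hne) u

end MetallicVertex

open MetallicVertex in
lemma metallicCube_dist_add_dist_eq_iff_eq_median {a n : ℕ} (u v w t : MetallicVertex a n) :
    ((metallicCube a n).dist u t + (metallicCube a n).dist t v = (metallicCube a n).dist u v ∧
      (metallicCube a n).dist v t + (metallicCube a n).dist t w = (metallicCube a n).dist v w ∧
      (metallicCube a n).dist u t + (metallicCube a n).dist t w = (metallicCube a n).dist u w) ↔
      t = median u v w := by
  simp only [metallicCube_dist, l1Dist_add_l1Dist_eq_iff, ← forall_and,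
    Nat.dist_add_dist_eq_and_and_iff_eq_median, Subtype.ext_iff, funext_iff, Fin.ext_iff,
    median_val, Fin.val_median]

theorem metallic_median_general (a n : ℕ) :
    ∀ u v w : MetallicVertex a n,
      ∃! m : MetallicVertex a n,
        (metallicCube a n).dist u m + (metallicCube a n).dist m v =
            (metallicCube a n).dist u v ∧
        (metallicCube a n).dist v m + (metallicCube a n).dist m w =
            (metallicCube a n).dist v w ∧
        (metallicCube a n).dist u m + (metallicCube a n).dist m w =
            (metallicCube a n).dist u w := fun u v w ↦
  ⟨MetallicVertex.median u v w, (metallicCube_dist_add_dist_eq_iff_eq_median u v w _).2 rfl,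
    fun t ht ↦ (metallicCube_dist_add_dist_eq_iff_eq_median u v w t).1 ht⟩

/-- every metallic cube is a median graph. -/
theorem metallic_median (a n : ℕ) (ha : 1 ≤ a) :
    ∀ u v w : MetallicVertex a n,
      ∃! m : MetallicVertex a n,
        (metallicCube a n).dist u m + (metallicCube a n).dist m v =
            (metallicCube a n).dist u v ∧
        (metallicCube a n).dist v m + (metallicCube a n).dist m w =
            (metallicCube a n).dist v w ∧
        (metallicCube a n).dist u m + (metallicCube a n).dist m w =
            (metallicCube a n).dist u w :=
  metallic_median_general a n
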